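/- For every sublinear function ρ and all reals K ≥ 1, C ≥ 0, J ≥ 0, r ≥ 0 there exists a constant R = R(ρ,K,C,r,J) ≥ 0 with the following property. Let Y be a proper geodesic metric space, o ∈ Y, α : [0,∞) → Y a ρ-contracting geodesic ray with α(0) = o, and β : [0,∞) → Y a continuous (K,C)-quasi-geodesic ray with β(0) = o. If there exists a point p in the image of α with d(o,p) ≥ R and d(p, im β) ≤ J, then the image of β intersects the closed κ(ρ,K,C)-neighbourhood of (im α) ∖ B(o,r), where B(o,r) is the open ball of radius r about o; that is, β fellow-travels along α for distance r. -/

import Mathlib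

open Set Metric

/-- A function `ρ : ℝ → ℝ` (thought of as defined on `[0,∞)`) is sublinear:
non-decreasing (on `[0,∞)`), eventually non-negative, and `ρ r / r → 0`. -/
def Sublinear (ρ : ℝ → ℝ) : Prop :=
  MonotoneOn ρ (Ici 0) ∧ (∃ R : ℝ, ∀ r ≥ R, 0 ≤ ρ r) ∧
    Filter.Tendsto (fun r => ρ r / r) Filter.atTop (nhds 0)

/-- Closest-point projection of `y` onto `Z`. -/
def ClosestPoints {Y : Type*} [MetricSpace Y] (Z : Set Y) (y : Y) : Set Y :=
  {z ∈ Z | dist y z = infDist y Z}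

/-- `Z` is a `ρ`-contracting subset. -/
def IsContracting {Y : Type*} [MetricSpace Y] (ρ : ℝ → ℝ) (Z : Set Y) : Prop :=
  ∀ x y : Y, x ∉ Z → y ∉ Z → dist x y < infDist y Z →
    diam (ClosestPoints Z x ∪ ClosestPoints Z y) ≤ ρ (infDist y Z)

/-- `β : [0,∞) → Y` is a `(K,C)`-quasi-geodesic ray. -/
def IsQGRay {Y : Type*} [MetricSpace Y] (K C : ℝ) (β : ℝ → Y) : Prop :=
  ∀ s ≥ (0:ℝ), ∀ t ≥ (0:ℝ),
    (1/K) * |s - t| - C ≤ dist (β s) (β t) ∧ dist (β s) (β t) ≤ K * |s - t| + C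

/-- `α : [0,∞) → Y` is a geodesic ray (isometric embedding of `[0,∞)`). -/
def IsGeodesicRay {Y : Type*} [MetricSpace Y] (α : ℝ → Y) : Prop :=
  ∀ s ≥ (0:ℝ), ∀ t ≥ (0:ℝ), dist (α s) (α t) = |s - t|

/-- κ(ρ,K,C) = max(3K², 3C, 1 + inf{R ≥ 0 : 3K²ρ(r) ≤ r for all r ≥ R}). -/
noncomputable def kappa (ρ : ℝ → ℝ) (K C : ℝ) : ℝ :=
  max (max (3 * K ^ 2) (3 * C))
    (1 + sInf {R : ℝ | 0 ≤ R ∧ ∀ r ≥ R, 3 * K ^ 2 * ρ r ≤ r})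

/-- κ'(ρ,K,C) = (K²+2)(2κ(ρ,K,C)+C). -/
noncomputable def kappa' (ρ : ℝ → ℝ) (K C : ℝ) : ℝ :=
  (K ^ 2 + 2) * (2 * kappa ρ K C + C)

/-- A metric space is geodesic: any two points are joined by an isometric
embedding of a compact interval. -/
def GeodesicSpace (Y : Type*) [MetricSpace Y] : Prop :=
  ∀ x y : Y, ∃ γ : ℝ → Y, γ 0 = x ∧ γ (dist x y) = y ∧
    ∀ s ∈ Icc 0 (dist x y), ∀ t ∈ Icc 0 (dist x y), dist (γ s) (γ t) = |s - t|


/-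
While `β` stays at distance `d ≥ κ` from `Z = im α`, stepping back along `β` by time `d/(2K)`
moves it by less than `d`, so by contraction its closest-point projection to `Z` moves by at most
`ρ(d) ≤ d/(3K²)`. The projection therefore drifts at speed at most `2/(3K)`, while `β` progresses
at speed at least `1/K`; hence an excursion of `β` outside the `κ`-neighbourhood of `Z` lasts a
bounded time. Going back from a time at which `β` is `J`-close to the far point `p` to the last
time `β` was `κ`-close to `Z` therefore costs a bounded distance, and the projection of `β` at
that time is still far from `o`.
-/

section Kappa

variable {ρ : ℝ → ℝ} {K C : ℝ}

theorem three_mul_sq_le_kappa : 3 * K ^ 2 ≤ kappa ρ K C :=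
  (le_max_left _ _).trans (le_max_left _ _)

theorem three_mul_le_kappa : 3 * C ≤ kappa ρ K C :=
  (le_max_right _ _).trans (le_max_left _ _)

theorem Sublinear.exists_forall_mul_le (hρ : Sublinear ρ) {c : ℝ} (hc : 0 < c) :
    ∃ R, 0 ≤ R ∧ ∀ r ≥ R, c * ρ r ≤ r := by
  obtain ⟨R, hR⟩ :=
    Filter.eventually_atTop.mp (hρ.2.2.eventually (gt_mem_nhds (inv_pos.2 hc)))
  refine ⟨max R 1, by positivity, fun r hr => ?_⟩
  have hr0 : 0 < r := one_pos.trans_le ((le_max_right _ _).trans hr)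
  have hρr : ρ r < c⁻¹ * r := (div_lt_iff₀ hr0).1 (hR r ((le_max_left _ _).trans hr))
  calc c * ρ r ≤ c * (c⁻¹ * r) := by gcongr
    _ = r := by field_simp

theorem Sublinear.mul_le_of_kappa_le (hρ : Sublinear ρ) (hK : K ≠ 0) {x : ℝ}
    (hx : kappa ρ K C ≤ x) : 3 * K ^ 2 * ρ x ≤ x := by
  have hlt : sInf {R : ℝ | 0 ≤ R ∧ ∀ r ≥ R, 3 * K ^ 2 * ρ r ≤ r} < x := by
    linarith [(le_max_right _ _).trans hx]
  obtain ⟨R, hR, hRx⟩ := exists_lt_of_csInf_lt (hρ.exists_forall_mul_le (by positivity)) hlt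
  exact hR.2 x hRx.le

end Kappa

section MetricSpace

variable {Y : Type*} [MetricSpace Y]

theorem IsGeodesicRay.isClosed_image {α : ℝ → Y} (hα : IsGeodesicRay α) :
    IsClosed (α '' Ici 0) := by
  have : CompleteSpace (Ici (0 : ℝ)) := isClosed_Ici.completeSpace_coe
  have hiso : Isometry ((Ici (0 : ℝ)).domRestrict α) := Isometry.of_dist_eq fun x y => by
    rw [Subtype.dist_eq, Real.dist_eq]
    exact hα x x.2 y y.2
  rw [← range_domRestrict]
  exact hiso.isClosedEmbedding.isClosed_range

theorem IsClosed.exists_mem_closestPoints [ProperSpace Y] {Z : Set Y} (hZ : IsClosed Z)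
    (hne : Z.Nonempty) (y : Y) : ∃ z, z ∈ ClosestPoints Z y := by
  obtain ⟨z, hz, h⟩ := hZ.exists_infDist_eq_dist hne y
  exact ⟨z, hz, h.symm⟩

theorem exists_eq_and_forall_ge_of_continuousOn {g : ℝ → ℝ} {a b c : ℝ} (hab : a ≤ b)
    (hg : ContinuousOn g (Icc a b)) (ha : g a ≤ c) (hb : c < g b) :
    ∃ s ∈ Ico a b, g s = c ∧ ∀ u ∈ Icc s b, c ≤ g u := by
  set A := Icc a b ∩ g ⁻¹' Iic c
  have hA : IsCompact A := isCompact_Icc.of_isClosed_subset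
    (hg.preimage_isClosed_of_isClosed isClosed_Icc isClosed_Iic) inter_subset_left
  obtain ⟨⟨has, hsb⟩, hgs⟩ : sSup A ∈ A := hA.sSup_mem ⟨a, left_mem_Icc.2 hab, ha⟩
  set s := sSup A
  have hafter : ∀ u ∈ Ioc s b, c < g u := fun u hu => not_le.1 fun hgu =>
    hu.1.not_ge (le_csSup hA.bddAbove ⟨⟨has.trans hu.1.le, hu.2⟩, hgu⟩)
  have hgs : g s = c := by
    obtain ⟨u, hu, hgu⟩ :=
      intermediate_value_Icc hsb (hg.mono (Icc_subset_Icc_left has)) ⟨hgs, hb.le⟩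
    rcases hu.1.eq_or_lt with rfl | hlt
    · exact hgu
    · exact absurd hgu (hafter u ⟨hlt, hu.2⟩).ne'
  refine ⟨s, ⟨has, hsb.lt_of_ne fun h => ?_⟩, hgs, fun u hu => ?_⟩
  · exact hb.not_ge (h ▸ hgs.le)
  · rcases hu.1.eq_or_lt with rfl | hlt
    · exact hgs.ge
    · exact (hafter u ⟨hlt, hu.2⟩).le

section Projection

variable {ρ : ℝ → ℝ} {Z : Set Y} {π : Y → Y}

theorem IsContracting.dist_le (hZ : IsContracting ρ Z) {x y x' y' : Y} (hx : x ∉ Z) (hy : y ∉ Z)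
    (hxy : dist x y < infDist y Z) (hx' : x' ∈ ClosestPoints Z x)
    (hy' : y' ∈ ClosestPoints Z y) : dist x' y' ≤ ρ (infDist y Z) := by
  have hbdd : ∀ w, Bornology.IsBounded (ClosestPoints Z w) := fun w =>
    isBounded_closedBall.subset fun z hz => by rw [mem_closedBall, dist_comm, hz.2]
  exact (dist_le_diam_of_mem ((hbdd x).union (hbdd y)) (Or.inl hx') (Or.inr hy')).trans
    (hZ x y hx hy hxy)

theorem notMem_of_infDist_pos {y : Y} (hy : 0 < infDist y Z) : y ∉ Z :=
  fun h => hy.ne' (infDist_zero_of_mem h)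

theorem IsContracting.dist_proj_le_div (hZ : IsContracting ρ Z)
    (hπ : ∀ y, π y ∈ ClosestPoints Z y) {κ C c : ℝ} (hκ : 0 < κ) (hCκ : 3 * C ≤ κ) (hc : 0 < c)
    (hρκ : ∀ x ≥ κ, c * ρ x ≤ x) {x y : Y} (hx : x ∉ Z) (hy : κ ≤ infDist y Z)
    (hxy : dist x y ≤ infDist y Z / 2 + C) : dist (π x) (π y) ≤ infDist y Z / c := by
  rw [le_div_iff₀' hc]
  refine le_trans ?_ (hρκ _ hy)
  gcongr
  exact hZ.dist_le hx (notMem_of_infDist_pos (hκ.trans_le hy)) (by linarith) (hπ x) (hπ y)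

end Projection

section Drift

variable {ρ : ℝ → ℝ} {Z : Set Y} {π : Y → Y} {β : ℝ → Y} {K C κ : ℝ}

theorem dist_le_half_add_of_sub_le (hK : 0 < K)
    (hβ : ∀ a ≥ (0 : ℝ), ∀ b ≥ (0 : ℝ), dist (β a) (β b) ≤ K * |a - b| + C)
    {a u d : ℝ} (ha : 0 ≤ a) (hau : a ≤ u) (h : u - a ≤ d / (2 * K)) :
    dist (β a) (β u) ≤ d / 2 + C := by
  rw [le_div_iff₀ (by positivity)] at h
  have hdist := hβ a ha u (ha.trans hau)
  rw [abs_sub_comm, abs_of_nonneg (sub_nonneg.2 hau)] at hdist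
  linarith

theorem IsContracting.dist_proj_le_of_forall_le (hZ : IsContracting ρ Z)
    (hπ : ∀ y, π y ∈ ClosestPoints Z y) (hK : 0 < K) (hκ : 0 < κ) (hCκ : 3 * C ≤ κ)
    (hρκ : ∀ x ≥ κ, 3 * K ^ 2 * ρ x ≤ x)
    (hβ : ∀ a ≥ (0 : ℝ), ∀ b ≥ (0 : ℝ), dist (β a) (β b) ≤ K * |a - b| + C)
    {s t : ℝ} (hs : 0 ≤ s) (hst : s ≤ t) (hfar : ∀ u ∈ Icc s t, κ ≤ infDist (β u) Z) :
    dist (π (β s)) (π (β t)) ≤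
      2 / (3 * K) * (t - s) + 2 * (infDist (β s) Z + C) / (3 * K ^ 2) := by
  have hjump : ∀ a ∈ Icc s t, ∀ u ∈ Icc s t, a ≤ u → u - a ≤ infDist (β u) Z / (2 * K) →
      dist (π (β a)) (π (β u)) ≤ infDist (β u) Z / (3 * K ^ 2) := fun a ha u hu hau h =>
    hZ.dist_proj_le_div hπ hκ hCκ (by positivity) hρκ
      (notMem_of_infDist_pos (hκ.trans_le (hfar a ha))) (hfar u hu)
      (dist_le_half_add_of_sub_le hK hβ (hs.trans ha.1) hau h)
  have hbase : ∀ u ∈ Icc s t, u - s ≤ infDist (β u) Z / (2 * K) →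
      dist (π (β s)) (π (β u)) ≤
        2 / (3 * K) * (u - s) + 2 * (infDist (β s) Z + C) / (3 * K ^ 2) := fun u hu h => by
    have hdu : infDist (β u) Z ≤ 2 * (infDist (β s) Z + C) := by
      linarith [infDist_le_infDist_add_dist (x := β u) (y := β s) (s := Z),
        dist_comm (β s) (β u), dist_le_half_add_of_sub_le hK hβ hs hu.1 h]
    calc dist (π (β s)) (π (β u)) ≤ infDist (β u) Z / (3 * K ^ 2) :=
          hjump s ⟨le_rfl, hst⟩ u hu hu.1 h
      _ ≤ 0 + 2 * (infDist (β s) Z + C) / (3 * K ^ 2) := by rw [zero_add]; gcongr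
      _ ≤ _ := by gcongr; exact mul_nonneg (by positivity) (sub_nonneg.2 hu.1)
  suffices ∀ n : ℕ, ∀ u ∈ Icc s t, u - s ≤ n * (κ / (2 * K)) →
      dist (π (β s)) (π (β u)) ≤
        2 / (3 * K) * (u - s) + 2 * (infDist (β s) Z + C) / (3 * K ^ 2) by
    refine this ⌈(t - s) / (κ / (2 * K))⌉₊ t ⟨hst, le_rfl⟩ ?_
    rw [← div_le_iff₀ (by positivity)]
    exact Nat.le_ceil _
  intro n
  induction n with
  | zero =>
    refine fun u hu hn => hbase u hu (le_trans ?_ (div_nonneg infDist_nonneg (by positivity)))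
    simpa using hn
  | succ n ih =>
    intro u hu hn
    by_cases hshort : u - s ≤ infDist (β u) Z / (2 * K)
    · exact hbase u hu hshort
    push Not at hshort
    set u' := u - infDist (β u) Z / (2 * K) with hu'
    have hstep : κ / (2 * K) ≤ infDist (β u) Z / (2 * K) := by gcongr; exact hfar u hu
    have hu'u : u' ≤ u := sub_le_self _ (div_nonneg infDist_nonneg (by positivity))
    have hu'_mem : u' ∈ Icc s t := ⟨by linarith, hu'u.trans hu.2⟩
    have hu'_len : u' - s ≤ n * (κ / (2 * K)) := by push_cast at hn; linarith
    calc dist (π (β s)) (π (β u)) ≤ dist (π (β s)) (π (β u')) + dist (π (β u')) (π (β u)) :=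
          dist_triangle _ _ _
      _ ≤ (2 / (3 * K) * (u' - s) + 2 * (infDist (β s) Z + C) / (3 * K ^ 2)) +
            infDist (β u) Z / (3 * K ^ 2) :=
          add_le_add (ih u' hu'_mem hu'_len)
            (hjump u' hu'_mem u hu hu'u (by rw [hu', sub_sub_cancel]))
      _ = 2 / (3 * K) * (u - s) + 2 * (infDist (β s) Z + C) / (3 * K ^ 2) := by
        rw [hu']; field_simp; ring

theorem IsContracting.exists_infDist_le_and_dist_le (hZ : IsContracting ρ Z)
    (hπ : ∀ y, π y ∈ ClosestPoints Z y)
    (hK : 1 ≤ K) (hC : 0 ≤ C) (hκ : 0 < κ) (hCκ : 3 * C ≤ κ)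
    (hρκ : ∀ x ≥ κ, 3 * K ^ 2 * ρ x ≤ x) (hβc : ContinuousOn β (Ici 0)) (hβ : IsQGRay K C β)
    (h0 : infDist (β 0) Z ≤ κ) {t : ℝ} (ht : 0 ≤ t) :
    ∃ s ≥ (0 : ℝ), infDist (β s) Z ≤ κ ∧
      dist (β s) (β t) ≤ 3 * K ^ 2 * (2 * κ + 2 * C + infDist (β t) Z) + C := by
  have hK0 : 0 < K := one_pos.trans_le hK
  have hD := infDist_nonneg (x := β t) (s := Z)
  by_cases hnear : infDist (β t) Z ≤ κ
  · exact ⟨t, ht, hnear, by rw [dist_self]; positivity⟩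
  push Not at hnear
  obtain ⟨s, ⟨hs, hst⟩, hκs, hfar⟩ :=
    exists_eq_and_forall_ge_of_continuousOn (g := fun u => infDist (β u) Z) ht
      ((continuous_infDist_pt Z).comp_continuousOn (hβc.mono Icc_subset_Ici_self)) h0 hnear
  refine ⟨s, hs, hκs.le, ?_⟩
  have hdrift := hZ.dist_proj_le_of_forall_le hπ hK0 hκ hCκ hρκ
    (fun a ha b hb => (hβ a ha b hb).2) hs hst.le hfar
  rw [hκs] at hdrift
  have htri : dist (β s) (β t) ≤ κ + dist (π (β s)) (π (β t)) + infDist (β t) Z := by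
    have := dist_triangle4 (β s) (π (β s)) (π (β t)) (β t)
    rwa [(hπ (β s)).2, dist_comm (π (β t)), (hπ (β t)).2, hκs] at this
  have habs : |s - t| = t - s := by rw [abs_sub_comm, abs_of_nonneg (by linarith)]
  obtain ⟨hlow, hup⟩ := hβ s hs t ht
  rw [habs] at hlow hup
  have herr : 2 * (κ + C) / (3 * K ^ 2) ≤ κ + C := by
    rw [div_le_iff₀ (by positivity)]
    nlinarith [one_le_pow₀ (n := 2) hK]
  have hT : (t - s) / K ≤ 3 * (2 * κ + 2 * C + infDist (β t) Z) := by
    have : 2 / (3 * K) * (t - s) = 2 / 3 * ((t - s) / K) := by field_simp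
    linarith [one_div_mul_eq_div K (t - s)]
  rw [div_le_iff₀ hK0] at hT
  nlinarith

end Drift

end MetricSpace

/-- Corollary 2.5 (reformulation of Cashen–Mackay's Lemma 4.6): for every sublinear
`ρ` and `K ≥ 1`, `C ≥ 0`, `J ≥ 0`, `r ≥ 0` there is `R = R(ρ,K,C,r,J) ≥ 0` such that
whenever `α` is a `ρ`-contracting geodesic ray based at `o` and `β` a continuous
`(K,C)`-quasi-geodesic ray based at `o` having a point of the image of `α` at
distance `≥ R` from `o` within `J` of its image, then `β` fellow-travels along `α`
for distance `r`: the image of `β` meets the closed `κ(ρ,K,C)`-neighbourhood of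
`(im α) ∖ B(o,r)`. -/
theorem fellow_travel_criterion (ρ : ℝ → ℝ) (hρ : Sublinear ρ)
    (K C J r : ℝ) (hK : 1 ≤ K) (hC : 0 ≤ C) (hJ : 0 ≤ J) (hr : 0 ≤ r) :
    ∃ R : ℝ, 0 ≤ R ∧
      ∀ (Y : Type*) [MetricSpace Y] [ProperSpace Y], GeodesicSpace Y →
        ∀ (o : Y) (α β : ℝ → Y),
          IsGeodesicRay α → α 0 = o → IsContracting ρ (α '' Ici 0) →
          ContinuousOn β (Ici 0) → IsQGRay K C β → β 0 = o →
          (∃ p ∈ α '' Ici 0, R ≤ dist o p ∧ infDist p (β '' Ici 0) ≤ J) →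
          ∃ t ≥ (0:ℝ), infDist (β t) ((α '' Ici 0) \ ball o r) ≤ kappa ρ K C := by
  set κ := kappa ρ K C
  have hκ : 0 < κ := lt_of_lt_of_le (by positivity) three_mul_sq_le_kappa
  refine ⟨r + (J + 1) + (3 * K ^ 2 * (2 * κ + 2 * C + (J + 1)) + C) + κ, by positivity, ?_⟩
  intro Y _ _ _ o α β hα hαo hcontr hβc hβ hβo ⟨p, hpα, hpR, hpβ⟩
  have hoα : o ∈ α '' Ici 0 := ⟨0, self_mem_Ici, hαo⟩
  choose π hπ using hα.isClosed_image.exists_mem_closestPoints ⟨o, hoα⟩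
  obtain ⟨_, ⟨t, ht, rfl⟩, hpt⟩ :=
    (infDist_lt_iff (nonempty_Ici.image β)).1 (hpβ.trans_lt (lt_add_one J))
  have htα : infDist (β t) (α '' Ici 0) ≤ J + 1 :=
    (infDist_le_dist_of_mem hpα).trans (dist_comm p (β t) ▸ hpt.le)
  obtain ⟨s, hs, hsα, hst⟩ := hcontr.exists_infDist_le_and_dist_le hπ hK hC hκ three_mul_le_kappa
    (fun x => hρ.mul_le_of_kappa_le (by positivity)) hβc hβ
    (by rw [hβo, infDist_zero_of_mem hoα]; exact hκ.le) ht
  have hsB : dist (β s) (β t) ≤ 3 * K ^ 2 * (2 * κ + 2 * C + (J + 1)) + C :=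
    hst.trans (by gcongr)
  have hπs : π (β s) ∉ ball o r := by
    rw [mem_ball, not_lt, dist_comm]
    linarith [dist_triangle4 o (π (β s)) (β s) (β t), dist_triangle o (β t) p,
      dist_comm (π (β s)) (β s), (hπ (β s)).2, dist_comm (β t) p]
  exact ⟨s, hs, (infDist_le_dist_of_mem (mem_sdiff_of_mem (hπ (β s)).1 hπs)).trans
    ((hπ (β s)).2.trans_le hsα)⟩
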